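/- Let x, y, w, z be nonnegative reals and 1 ≤ p ≤ 2. Then (x + z)^{1/p} ≤ ( Tr | [[x^{1/p}, y^{1/p}],[w^{1/p}, z^{1/p}]] |^p )^{1/p}, i.e. x + z ≤ g(B) where B = [[x,y],[w,z]] and g is as in the subadditivity lemma. -/

import Mathlib

/-!
The diagonal `(a, d)` of a real `2 × 2` matrix `M` with `a, d ≥ 0` is weakly majorized by its
singular values `s₀, s₁` (the square roots of the eigenvalues of `MᴴM`): each of `a, d` is at most
`max s₀ s₁`, and `a + d ≤ s₀ + s₁`. Both follow from `s₀² + s₁² = ‖M‖²_F` and `s₀ s₁ = |det M|`.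
Since `t ↦ t ^ p` is convex and increasing for `p ≥ 1`, this gives `a ^ p + d ^ p ≤ s₀ ^ p + s₁ ^ p`,
and taking `a = x ^ (1/p)`, `d = z ^ (1/p)` yields `x + z ≤ g(B)`.
-/

open scoped Matrix

/-- `g(A) = Tr |[[a^{1/p}, b^{1/p}],[c^{1/p}, d^{1/p}]]|^p` where `|X| = (X*X)^{1/2}`. -/
noncomputable def gfun (p : ℝ) (A : Matrix (Fin 2) (Fin 2) ℝ) : ℝ :=
  ∑ i, (Matrix.isHermitian_conjTranspose_mul_self
      (A.map fun x => x ^ (1 / p))).eigenvalues i ^ (p / 2)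

section Convex

variable {s : Set ℝ} {f : ℝ → ℝ}

lemma ConvexOn.map_add_add_map_le (hf : ConvexOn ℝ s f) {v u t : ℝ} (hv : v ∈ s)
    (hut : u + t ∈ s) (hvu : v ≤ u) (ht : 0 ≤ t) :
    f (v + t) + f u ≤ f v + f (u + t) := by
  rcases ht.eq_or_lt with rfl | ht
  · simp only [add_zero, le_refl]
  have hd : 0 < u + t - v := by linarith
  -- `v + t` and `u` are the convex combinations of `v` and `u + t` with weights `(α, β)`, `(β, α)`
  set α := (u - v) / (u + t - v)
  set β := t / (u + t - v)
  have hαβ : α + β = 1 := by simp only [α, β]; field_simp; ring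
  have hα : 0 ≤ α := div_nonneg (by linarith) hd.le
  have hβ : 0 ≤ β := div_nonneg ht.le hd.le
  have e₁ : α • v + β • (u + t) = v + t := by
    simp only [α, β, smul_eq_mul]; field_simp; ring
  have e₂ : β • v + α • (u + t) = u := by
    simp only [α, β, smul_eq_mul]; field_simp; ring
  have h₁ := e₁ ▸ hf.2 hv hut hα hβ hαβ
  have h₂ := e₂ ▸ hf.2 hv hut hβ hα (by linarith)
  simp only [smul_eq_mul] at h₁ h₂
  linear_combination h₁ + h₂ + (f v + f (u + t)) * hαβ

/-- Weak majorization inequality (Tomić–Weyl) for two points. -/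
lemma ConvexOn.add_le_add_of_max_le_of_add_le (hf : ConvexOn ℝ s f) (hmono : MonotoneOn f s)
    {u v u' v' : ℝ} (hu : u ∈ s) (hv : v ∈ s) (hu' : u' ∈ s) (hv' : v' ∈ s)
    (hmax : max u v ≤ max u' v') (hsum : u + v ≤ u' + v') :
    f u + f v ≤ f u' + f v' := by
  wlog hvu : v ≤ u generalizing u v
  · rw [add_comm]
    exact this hv hu (by rwa [max_comm]) (by linarith) (by linarith)
  wlog hvu' : v' ≤ u' generalizing u' v'
  · rw [add_comm (f u')]
    exact this hv' hu' (by rwa [max_comm v' u']) (by linarith) (by linarith)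
  rw [max_eq_left hvu, max_eq_left hvu'] at hmax
  rcases le_or_gt v v' with hvv' | hv'v
  · linarith [hmono hu hu' hmax, hmono hv hv' hvv']
  · have hut : u + (v - v') ∈ s :=
      hf.1.ordConnected.out hu hu' ⟨by linarith, by linarith⟩
    have := hf.map_add_add_map_le hv' hut (by linarith) (by linarith)
    rw [add_sub_cancel] at this
    linarith [hmono hut hu' (by linarith)]

end Convex

section TwoByTwo

variable {a b c d l₀ l₁ : ℝ}

lemma le_max_sqrt_of_add_eq_of_mul_eq (hsum : l₀ + l₁ = a ^ 2 + b ^ 2 + c ^ 2 + d ^ 2)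
    (hprod : l₀ * l₁ = (a * d - b * c) ^ 2) : a ≤ max √l₀ √l₁ := by
  -- `(l₀ - (a² + c²)) (l₁ - (a² + c²)) = -(a b + c d)² ≤ 0`, so some `lᵢ ≥ a² + c²`
  have hsq : a ^ 2 ≤ max l₀ l₁ := by
    by_contra! h
    rw [max_lt_iff] at h
    nlinarith [sq_nonneg (a * b + c * d), sq_nonneg c]
  calc a ≤ |a| := le_abs_self a
    _ ≤ √(max l₀ l₁) := Real.abs_le_sqrt hsq
    _ = max √l₀ √l₁ := Real.sqrt_monotone.map_max

lemma add_le_sqrt_add_sqrt_of_add_eq_of_mul_eq (hl₀ : 0 ≤ l₀) (hl₁ : 0 ≤ l₁)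
    (hsum : l₀ + l₁ = a ^ 2 + b ^ 2 + c ^ 2 + d ^ 2)
    (hprod : l₀ * l₁ = (a * d - b * c) ^ 2) : a + d ≤ √l₀ + √l₁ := by
  have hgeo : √l₀ * √l₁ = |a * d - b * c| := by
    rw [← Real.sqrt_mul hl₀, hprod, Real.sqrt_sq_eq_abs]
  have hsq : (a + d) ^ 2 ≤ (√l₀ + √l₁) ^ 2 := by
    nlinarith [Real.sq_sqrt hl₀, Real.sq_sqrt hl₁, le_abs_self (a * d - b * c),
      sq_nonneg (b - c)]
  exact abs_le_of_sq_le_sq' hsq (by positivity) |>.2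

end TwoByTwo

namespace Matrix

variable (A : Matrix (Fin 2) (Fin 2) ℝ)

lemma eigenvalues_conjTranspose_mul_self_fin_two_add :
    (isHermitian_conjTranspose_mul_self A).eigenvalues 0 +
      (isHermitian_conjTranspose_mul_self A).eigenvalues 1 =
      A 0 0 ^ 2 + A 0 1 ^ 2 + A 1 0 ^ 2 + A 1 1 ^ 2 := by
  have h := (isHermitian_conjTranspose_mul_self A).trace_eq_sum_eigenvalues
  generalize (isHermitian_conjTranspose_mul_self A).eigenvalues = l at h ⊢
  simp only [conjTranspose_eq_transpose_of_trivial, trace_fin_two, mul_apply, transpose_apply,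
    Fin.sum_univ_two, Real.ringHom_apply] at h
  linear_combination -h

lemma eigenvalues_conjTranspose_mul_self_fin_two_mul :
    (isHermitian_conjTranspose_mul_self A).eigenvalues 0 *
      (isHermitian_conjTranspose_mul_self A).eigenvalues 1 = A.det ^ 2 := by
  have h := (isHermitian_conjTranspose_mul_self A).det_eq_prod_eigenvalues
  generalize (isHermitian_conjTranspose_mul_self A).eigenvalues = l at h ⊢
  simp only [conjTranspose_eq_transpose_of_trivial, det_mul, det_transpose, Real.ringHom_apply,
    Fin.prod_univ_two] at h
  linear_combination -h

lemma rpow_add_rpow_le_sum_eigenvalues_conjTranspose_mul_self_rpow {p : ℝ} (hp : 1 ≤ p)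
    {A : Matrix (Fin 2) (Fin 2) ℝ} (h₀ : 0 ≤ A 0 0) (h₁ : 0 ≤ A 1 1) :
    A 0 0 ^ p + A 1 1 ^ p ≤
      ∑ i, (isHermitian_conjTranspose_mul_self A).eigenvalues i ^ (p / 2) := by
  set l := (isHermitian_conjTranspose_mul_self A).eigenvalues
  have hl : ∀ i, 0 ≤ l i := eigenvalues_conjTranspose_mul_self_nonneg A
  have hsum : l 0 + l 1 = A 0 0 ^ 2 + A 0 1 ^ 2 + A 1 0 ^ 2 + A 1 1 ^ 2 :=
    eigenvalues_conjTranspose_mul_self_fin_two_add A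
  have hprod : l 0 * l 1 = (A 0 0 * A 1 1 - A 0 1 * A 1 0) ^ 2 := by
    rw [← det_fin_two]; exact eigenvalues_conjTranspose_mul_self_fin_two_mul A
  have hsum' : l 1 + l 0 = A 1 1 ^ 2 + A 1 0 ^ 2 + A 0 1 ^ 2 + A 0 0 ^ 2 := by
    linear_combination hsum
  have hprod' : l 1 * l 0 = (A 1 1 * A 0 0 - A 1 0 * A 0 1) ^ 2 := by
    linear_combination hprod
  have hmax : max (A 0 0) (A 1 1) ≤ max √(l 0) √(l 1) :=
    max_le (le_max_sqrt_of_add_eq_of_mul_eq hsum hprod)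
      (max_comm √(l 1) √(l 0) ▸ le_max_sqrt_of_add_eq_of_mul_eq hsum' hprod')
  have key := (convexOn_rpow hp).add_le_add_of_max_le_of_add_le
    (Real.monotoneOn_rpow_Ici_of_exponent_nonneg (by linarith)) h₀ h₁
    (Real.sqrt_nonneg _) (Real.sqrt_nonneg _) hmax
    (add_le_sqrt_add_sqrt_of_add_eq_of_mul_eq (hl 0) (hl 1) hsum hprod)
  simpa only [Fin.sum_univ_two, Real.rpow_div_two_eq_sqrt p (hl _)] using key

end Matrix

theorem diag_trace_le_g_general (p x y w z : ℝ) (hp1 : 1 ≤ p)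
    (hx : 0 ≤ x) (hz : 0 ≤ z) :
    (x + z) ^ (1 / p) ≤ gfun p !![x, y; w, z] ^ (1 / p) ∧
      x + z ≤ gfun p !![x, y; w, z] := by
  have hroot {t : ℝ} (ht : 0 ≤ t) : (t ^ (1 / p)) ^ p = t := by
    rw [one_div, Real.rpow_inv_rpow ht (by linarith)]
  have hmain : x + z ≤ gfun p !![x, y; w, z] :=
    calc x + z = (x ^ (1 / p)) ^ p + (z ^ (1 / p)) ^ p := by rw [hroot hx, hroot hz]
      _ ≤ gfun p !![x, y; w, z] :=
        Matrix.rpow_add_rpow_le_sum_eigenvalues_conjTranspose_mul_self_rpow hp1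
          (A := !![x, y; w, z].map (· ^ (1 / p))) (Real.rpow_nonneg hx _) (Real.rpow_nonneg hz _)
  exact ⟨Real.rpow_le_rpow (by linarith) hmain (by positivity), hmain⟩

theorem diag_trace_le_g (p x y w z : ℝ) (hp1 : 1 ≤ p) (hp2 : p ≤ 2)
    (hx : 0 ≤ x) (hy : 0 ≤ y) (hw : 0 ≤ w) (hz : 0 ≤ z) :
    (x + z) ^ (1 / p) ≤ gfun p !![x, y; w, z] ^ (1 / p) ∧
      x + z ≤ gfun p !![x, y; w, z] :=
  diag_trace_le_g_general p x y w z hp1 hx hz
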